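/- Let d, n, p ≥ 1 and let Z, Z^{(i)} ⊆ ℝ^d with Z ∪ Z^{(i)} having nonempty interior. Assume: (a) for every coordinate r, the projection Z^{(i)}_r is bounded, with infimum α_inf^r and supremum α_sup^r, and there exists ζ > 0 such that the boundary strips B_r = (α_inf^r, α_inf^r + ζ) ∪ (α_sup^r − ζ, α_sup^r) satisfy B_r ⊆ Z^{(i)}_r and ∏_{r=1}^d B_r ⊆ Z^{(i)}; and (b) there is a set S ⊆ {1,…,d} such that Z^{(i)}_{i,j} = Z^{(i)}_i × Z^{(i)}_j for all j ∈ S. Let g(z) = G φ_p(z) with G ∈ ℝ^{n×M_{d,p}} of full column rank, h(z̃) = H φ_p(z̃) with H ∈ ℝ^{n×M_{d,p}}, and let f : ℝ^n → ℝ^d satisfy h(f(x)) = x for all x ∈ g(Z ∪ Z^{(i)}), with f(g(Z ∪ Z^{(i)})) having nonempty interior. Suppose there are an index k and a set S' ⊆ {1,…,d}\{k} with |S'| ≤ |S| such that Ẑ^{(i)}_{k,m} = Ẑ^{(i)}_k × Ẑ^{(i)}_m for all m ∈ S', where Ẑ^{(i)} = f(g(Z^{(i)})). Then f(g(z)) =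 A z + c on Z ∪ Z^{(i)} for some invertible A ∈ ℝ^{d×d} and c ∈ ℝ^d and, writing a_r for the r-th row of A, the row a_k has at most d − |S'| nonzero entries, each row a_k and a_m (m ∈ S') is nonzero, and for every m ∈ S' the row a_m vanishes in every column in which a_k is nonzero. -/

import Mathlib

/-!
Write `F = f ∘ g`. Since `G` has full column rank, the reconstruction identity gives
`φ_p(z) = M φ_p(F z)` on `Z ∪ Zⁱ` for a fixed matrix `M`, so every monomial of `z` is a
polynomial of degree `≤ p` in `F z`; in particular `z_r = q(F z)` and `z_r ^ p = q'(F z)`.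
As `F(Z ∪ Zⁱ)` has nonempty interior, `q ^ p = q'` as polynomials, which forces `deg q ≤ 1`.
So `z` is an affine function of `F z`, with invertible linear part because `Z ∪ Zⁱ` has
nonempty interior, and `F z = A z + c`.

Support independence of `Ẑⁱ` for `(k, m)` says that for `z₁, z₂ ∈ Zⁱ` some `z ∈ Zⁱ` has
`a_k ⬝ z = a_k ⬝ z₁` and `a_m ⬝ z = a_m ⬝ z₂`, hence `sup (u + v) ⬝ Zⁱ ≥ sup u ⬝ Zⁱ + sup v ⬝ Zⁱ`
for all multiples `u` of `a_k` and `v` of `a_m`. The boundary strips make `sup w ⬝ Zⁱ` the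
support function of the bounding box, which is strictly subadditive on a pair with opposite
signs in some coordinate: so `a_k` and `a_m` have disjoint supports. Linear independence of
the rows of `A` then bounds the support of `a_k` by `d - |S'|`.
-/

/-- The finite set of multi-indices `m : Fin d → ℕ` (encoded with values in `Fin (p+1)`)
with total degree `∑ k, m k ≤ p`. -/
abbrev MultiIdx (d p : ℕ) : Type := {m : Fin d → Fin (p + 1) // ∑ k, (m k : ℕ) ≤ p}

/-- The monomial feature map `φ_p(z)_m = ∏ k, z k ^ (m k)`. -/
noncomputable def phi (d p : ℕ) (z : Fin d → ℝ) : MultiIdx d p → ℝ :=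
  fun m => ∏ k, z k ^ (m.1 k : ℕ)

/-- Projection of a set `W ⊆ ℝ^d` onto coordinate `r`. -/
def proj {d : ℕ} (r : Fin d) (W : Set (Fin d → ℝ)) : Set ℝ :=
  (fun z => z r) '' W

/-- Projection of a set `W ⊆ ℝ^d` onto the coordinate pair `(r, s)`. -/
def proj2 {d : ℕ} (r s : Fin d) (W : Set (Fin d → ℝ)) : Set (ℝ × ℝ) :=
  (fun z => (z r, z s)) '' W

open Matrix MvPolynomial Set
open scoped Pointwise

namespace MvPolynomial

variable {σ R : Type*}

theorem totalDegree_pow_of_isDomain [CommRing R] [IsDomain R] {q : MvPolynomial σ R}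
    (hq : q ≠ 0) (n : ℕ) : (q ^ n).totalDegree = n * q.totalDegree := by
  induction n with
  | zero => simp
  | succ n ih =>
    rw [pow_succ, totalDegree_mul_of_isDomain (pow_ne_zero n hq) hq, ih, Nat.succ_mul]

theorem totalDegree_le_one_of_totalDegree_pow_le [CommRing R] [IsDomain R]
    {q : MvPolynomial σ R} {n : ℕ} (hn : 0 < n) (h : (q ^ n).totalDegree ≤ n) :
    q.totalDegree ≤ 1 := by
  rcases eq_or_ne q 0 with rfl | hq
  · simp
  rw [totalDegree_pow_of_isDomain hq] at h
  exact Nat.le_of_mul_le_mul_left (by simpa using h) hn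

theorem eq_C_add_homogeneousComponent_one [CommSemiring R] {q : MvPolynomial σ R}
    (h : q.totalDegree ≤ 1) : q = C (coeff 0 q) + homogeneousComponent 1 q := by
  conv_lhs => rw [← sum_homogeneousComponent q]
  rw [Finset.sum_subset (Finset.range_subset_range.2 (Nat.succ_le_succ h)) fun i _ hi =>
    homogeneousComponent_eq_zero i q (by simpa using hi)]
  simp [Finset.sum_range_succ, homogeneousComponent_zero]

theorem exists_eval_eq_dotProduct_add [CommSemiring R] [Fintype σ] {q : MvPolynomial σ R}
    (h : q.totalDegree ≤ 1) : ∃ (a : σ → R) (b : R), ∀ w, eval w q = a ⬝ᵥ w + b := by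
  obtain ⟨a, ha⟩ := (Submodule.mem_span_range_iff_exists_fun R).mp
    (homogeneousSubmodule_one_eq_span_X (σ := σ) (R := R) ▸ homogeneousComponent_mem 1 q)
  refine ⟨a, coeff 0 q, fun w => ?_⟩
  conv_lhs => rw [eq_C_add_homogeneousComponent_one h, ← ha]
  simp [dotProduct, add_comm]

theorem eq_of_eqOn_of_nonempty_interior {𝕜 : Type*} [RCLike 𝕜] [Fintype σ]
    {p q : MvPolynomial σ 𝕜} {s : Set (σ → 𝕜)} (hs : (interior s).Nonempty)
    (h : EqOn (eval · p) (eval · q) s) : p = q := by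
  obtain ⟨w₀, hw₀⟩ := hs
  have hpq := (AnalyticOnNhd.eval_mvPolynomial p).eqOn_of_preconnected_of_eventuallyEq
    (AnalyticOnNhd.eval_mvPolynomial q) isPreconnected_univ (mem_univ w₀)
    (Filter.eventuallyEq_of_mem (mem_interior_iff_mem_nhds.mp hw₀) h)
  exact funext fun w => hpq (mem_univ w)

end MvPolynomial

theorem Matrix.exists_eq_mulVec_of_mulVec_eq {K m n l : Type*} [Field K] [Fintype n]
    [Fintype l] [DecidableEq l] {G : Matrix m n K} {H : Matrix m l K}
    (hG : Function.Injective G.mulVec) :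
    ∃ M : Matrix n l K, ∀ u v, G *ᵥ u = H *ᵥ v → u = M *ᵥ v := by
  obtain ⟨E, hE⟩ := G.mulVecLin.exists_leftInverse_of_injective
    (LinearMap.ker_eq_bot.mpr hG)
  refine ⟨LinearMap.toMatrix' (E ∘ₗ H.mulVecLin), fun u v huv => ?_⟩
  rw [← Matrix.toLin'_apply, Matrix.toLin'_toMatrix', LinearMap.comp_apply,
    Matrix.mulVecLin_apply, ← huv, ← Matrix.mulVecLin_apply, ← LinearMap.comp_apply, hE,
    LinearMap.id_apply]

theorem Matrix.isUnit_of_nonempty_interior_range {𝕜 n : Type*} [NontriviallyNormedField 𝕜]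
    [Fintype n] [DecidableEq n] {L : Matrix n n 𝕜} {b : n → 𝕜}
    (h : (interior (range fun x => L *ᵥ x + b)).Nonempty) : IsUnit L := by
  have hrange : (range fun x => L *ᵥ x + b) =
      Homeomorph.addRight b '' (LinearMap.range L.mulVecLin : Set (n → 𝕜)) := by
    ext; simp [← sub_eq_add_neg, eq_sub_iff_add_eq]
  rw [hrange, ← Homeomorph.image_interior, image_nonempty] at h
  rw [← Matrix.mulVec_surjective_iff_isUnit]
  exact LinearMap.range_eq_top.mp (Submodule.eq_top_of_nonempty_interior' _ h)

theorem LinearIndependent.card_add_card_le_of_forall_eq_zero {K ι κ : Type*} [Field K]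
    [Fintype κ] {v : ι → κ → K} (hv : LinearIndependent K v) (s : Finset ι) (t : Finset κ)
    (h : ∀ i ∈ s, ∀ c ∈ t, v i c = 0) : s.card + t.card ≤ Fintype.card κ := by
  classical
  have hres : LinearIndependent K fun (i : s) (c : ↥tᶜ) => v i c := by
    rw [Fintype.linearIndependent_iff]
    intro g hg
    refine Fintype.linearIndependent_iff.mp (hv.comp _ Subtype.val_injective) g
      (funext fun c => ?_)
    by_cases hc : c ∈ t
    · simp [h _ (Subtype.prop _) c hc]
    · simpa using congrFun hg ⟨c, Finset.mem_compl.2 hc⟩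
  have hle := hres.fintype_card_le_finrank
  rw [Module.finrank_fintype_fun_eq_card, Fintype.card_coe, Fintype.card_coe,
    Finset.card_compl] at hle
  have := t.card_le_univ
  omega

section Features

variable {d p : ℕ}

def MultiIdx.single (r : Fin d) (e : Fin (p + 1)) : MultiIdx d p :=
  ⟨Pi.single r e, by
    rw [Finset.sum_eq_single r (fun k _ hk => by simp [hk]) (by simp)]
    simpa using e.is_le⟩

theorem phi_single (z : Fin d → ℝ) (r : Fin d) (e : Fin (p + 1)) :
    phi d p z (MultiIdx.single r e) = z r ^ (e : ℕ) := by
  simp [phi, MultiIdx.single, Pi.single_apply, apply_ite]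

noncomputable def featurePoly (c : MultiIdx d p → ℝ) : MvPolynomial (Fin d) ℝ :=
  ∑ m, C (c m) * ∏ k, X k ^ (m.1 k : ℕ)

theorem eval_featurePoly (c : MultiIdx d p → ℝ) (w : Fin d → ℝ) :
    eval w (featurePoly c) = c ⬝ᵥ phi d p w := by
  simp [featurePoly, phi, dotProduct]

theorem totalDegree_featurePoly_le (c : MultiIdx d p → ℝ) :
    (featurePoly c).totalDegree ≤ p := by
  refine (totalDegree_finsetSum _ _).trans (Finset.sup_le fun m _ => ?_)
  refine (totalDegree_mul _ _).trans ?_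
  rw [totalDegree_C, zero_add]
  refine (totalDegree_finsetProd _ _).trans (le_trans (Finset.sum_le_sum fun k _ => ?_) m.2)
  exact (totalDegree_pow _ _).trans (by rw [totalDegree_X, mul_one])

theorem exists_affine_coord_of_phi_eq_mulVec (hp : 1 ≤ p) {W : Set (Fin d → ℝ)}
    {F : (Fin d → ℝ) → Fin d → ℝ} {M : Matrix (MultiIdx d p) (MultiIdx d p) ℝ}
    (hM : ∀ z ∈ W, phi d p z = M *ᵥ phi d p (F z)) (hint : (interior (F '' W)).Nonempty)
    (r : Fin d) : ∃ (a : Fin d → ℝ) (b : ℝ), ∀ z ∈ W, z r = a ⬝ᵥ F z + b := by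
  have hcoord : ∀ e : Fin (p + 1), ∀ z ∈ W,
      z r ^ (e : ℕ) = eval (F z) (featurePoly (M (MultiIdx.single r e))) := by
    intro e z hz
    rw [eval_featurePoly, ← phi_single, hM z hz]
    rfl
  set q := featurePoly (M (MultiIdx.single r ⟨1, by omega⟩))
  have hpow : q ^ p = featurePoly (M (MultiIdx.single r (Fin.last p))) := by
    refine eq_of_eqOn_of_nonempty_interior hint ?_
    rintro _ ⟨z, hz, rfl⟩
    simp [q, ← hcoord _ z hz]
  obtain ⟨a, b, hab⟩ := exists_eval_eq_dotProduct_add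
    (totalDegree_le_one_of_totalDegree_pow_le hp (hpow ▸ totalDegree_featurePoly_le _))
  exact ⟨a, b, fun z hz => by simpa [q, ← hcoord _ z hz] using hab (F z)⟩

theorem exists_isUnit_affine_of_reconstruction {n : ℕ} (hp : 1 ≤ p) {W : Set (Fin d → ℝ)}
    (hW : (interior W).Nonempty) {G H : Matrix (Fin n) (MultiIdx d p) ℝ}
    (hG : Function.Injective G.mulVec) {f : (Fin n → ℝ) → Fin d → ℝ}
    (hrec : ∀ x ∈ (fun z => G *ᵥ phi d p z) '' W, H *ᵥ phi d p (f x) = x)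
    (himg : (interior (f '' ((fun z => G *ᵥ phi d p z) '' W))).Nonempty) :
    ∃ (A : Matrix (Fin d) (Fin d) ℝ) (c : Fin d → ℝ),
      IsUnit A ∧ ∀ z ∈ W, f (G *ᵥ phi d p z) = A *ᵥ z + c := by
  obtain ⟨M, hM⟩ := Matrix.exists_eq_mulVec_of_mulVec_eq (H := H) hG
  rw [image_image] at himg
  choose a b hab using exists_affine_coord_of_phi_eq_mulVec hp
    (fun z hz => hM _ _ (hrec _ (mem_image_of_mem _ hz)).symm) himg
  set L := Matrix.of a
  have hL : IsUnit L := Matrix.isUnit_of_nonempty_interior_range <|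
    hW.mono <| interior_mono fun z hz => ⟨_, (funext fun r => hab r z hz).symm⟩
  refine ⟨L⁻¹, -(L⁻¹ *ᵥ b), Matrix.isUnit_nonsing_inv_iff.2 hL, fun z hz => ?_⟩
  conv_rhs => rw [show z = L *ᵥ f (G *ᵥ phi d p z) + b from funext fun r => hab r z hz]
  rw [mulVec_add, mulVec_mulVec, nonsing_inv_mul _ ((isUnit_iff_isUnit_det L).mp hL),
    one_mulVec, add_neg_cancel_right]

end Features

theorem exists_mem_apply_eq_of_proj2_eq_prod {d : ℕ} {W : Set (Fin d → ℝ)} {r s : Fin d}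
    (h : proj2 r s W = proj r W ×ˢ proj s W) {x y : Fin d → ℝ} (hx : x ∈ W) (hy : y ∈ W) :
    ∃ z ∈ W, z r = x r ∧ z s = y s := by
  obtain ⟨z, hz, hzxy⟩ : (x r, y s) ∈ proj2 r s W := h ▸ ⟨⟨x, hx, rfl⟩, ⟨y, hy, rfl⟩⟩
  exact ⟨z, hz, Prod.ext_iff.mp hzxy⟩

theorem exists_dotProduct_eq_of_proj2_image_eq_prod {d : ℕ} {W : Set (Fin d → ℝ)}
    {F : (Fin d → ℝ) → Fin d → ℝ} {A : Matrix (Fin d) (Fin d) ℝ} {c : Fin d → ℝ}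
    (hF : ∀ z ∈ W, F z = A *ᵥ z + c) {r s : Fin d}
    (h : proj2 r s (F '' W) = proj r (F '' W) ×ˢ proj s (F '' W)) :
    ∀ z₁ ∈ W, ∀ z₂ ∈ W, ∃ z ∈ W, A r ⬝ᵥ z = A r ⬝ᵥ z₁ ∧ A s ⬝ᵥ z = A s ⬝ᵥ z₂ := by
  intro z₁ hz₁ z₂ hz₂
  obtain ⟨_, ⟨z, hz, rfl⟩, h₁, h₂⟩ :=
    exists_mem_apply_eq_of_proj2_eq_prod h (mem_image_of_mem F hz₁) (mem_image_of_mem F hz₂)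
  rw [hF z hz, hF z₁ hz₁] at h₁
  rw [hF z hz, hF z₂ hz₂] at h₂
  exact ⟨z, hz, add_right_cancel h₁, add_right_cancel h₂⟩

section Box

variable {d : ℕ} {W : Set (Fin d → ℝ)} {a b : Fin d → ℝ} {ζ : ℝ}

def boxSupportFun (a b w : Fin d → ℝ) : ℝ :=
  ∑ s, max (w s * a s) (w s * b s)

theorem dotProduct_le_boxSupportFun {z : Fin d → ℝ} (hz : z ∈ Icc a b) (w : Fin d → ℝ) :
    w ⬝ᵥ z ≤ boxSupportFun a b w :=
  Finset.sum_le_sum fun s _ => by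
    rcases le_total 0 (w s) with hw | hw
    · exact le_max_of_le_right (mul_le_mul_of_nonneg_left (hz.2 s) hw)
    · exact le_max_of_le_left (mul_le_mul_of_nonpos_left (hz.1 s) hw)

theorem boxSupportFun_add_lt {u v : Fin d → ℝ} {r : Fin d} (hab : a r < b r) (hu : 0 < u r)
    (hv : v r < 0) : boxSupportFun a b (u + v) < boxSupportFun a b u + boxSupportFun a b v := by
  rw [boxSupportFun, boxSupportFun, boxSupportFun, ← Finset.sum_add_distrib]
  refine Finset.sum_lt_sum (fun s _ => ?_) ⟨r, Finset.mem_univ r, ?_⟩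
  · simpa only [Pi.add_apply, add_mul] using max_add_add_le_max_add_max
  · have hua := mul_lt_mul_of_pos_left hab hu
    have hvb := mul_lt_mul_of_neg_left hab hv
    calc max ((u + v) r * a r) ((u + v) r * b r) < u r * b r + v r * a r := by
          simp only [Pi.add_apply, add_mul]
          exact max_lt (by linarith) (by linarith)
      _ ≤ _ := add_le_add (le_max_right _ _) (le_max_left _ _)

variable (hW : W ⊆ Icc a b) (hζ : 0 < ζ)
  (hstrips : univ.pi (fun s => Ioo (a s) (a s + ζ) ∪ Ioo (b s - ζ) (b s)) ⊆ W)
include hW hζ hstrips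

theorem lt_of_pi_strips_subset (s : Fin d) : a s < b s := by
  have hmem : (fun s => a s + ζ / 2) ∈ W :=
    hstrips fun s _ => Or.inl ⟨by linarith, by linarith⟩
  have := (hW hmem).2 s
  dsimp only at this
  linarith

theorem isLUB_dotProduct_image (w : Fin d → ℝ) :
    IsLUB ((w ⬝ᵥ ·) '' W) (boxSupportFun a b w) := by
  let corner : Fin d → ℝ := fun s => if w s * a s ≤ w s * b s then b s else a s
  let inward : Fin d → ℝ := fun s => if w s * a s ≤ w s * b s then -1 else 1
  have hcorner : w ⬝ᵥ corner = boxSupportFun a b w := Finset.sum_congr rfl fun s _ => by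
    by_cases h : w s * a s ≤ w s * b s
    · simp [corner, h]
    · simp [corner, h, max_eq_left (le_of_not_ge h)]
  have hmem : ∀ δ ∈ Ioo 0 ζ, corner + δ • inward ∈ W := fun δ hδ => hstrips fun s _ => by
    obtain ⟨hδ₀, hδζ⟩ := hδ
    by_cases h : w s * a s ≤ w s * b s
    · simp only [corner, inward, h, Pi.add_apply, Pi.smul_apply, smul_eq_mul, if_true]
      exact Or.inr ⟨by linarith, by linarith⟩
    · simp only [corner, inward, h, Pi.add_apply, Pi.smul_apply, smul_eq_mul, if_false]
      exact Or.inl ⟨by linarith, by linarith⟩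
  refine isLUB_of_mem_closure
    (forall_mem_image.2 fun z hz => dotProduct_le_boxSupportFun (hW hz) w) ?_
  have hcont : Continuous fun δ : ℝ => w ⬝ᵥ (corner + δ • inward) := by
    simp only [dotProduct_add, dotProduct_smul, smul_eq_mul]
    fun_prop
  have htends := (hcont.tendsto 0).mono_left (nhdsWithin_le_nhds (s := Ioi 0))
  simp only [zero_smul, add_zero, hcorner] at htends
  exact mem_closure_of_tendsto htends <|
    Filter.mem_of_superset (Ioo_mem_nhdsGT hζ) fun δ hδ => mem_image_of_mem _ (hmem δ hδ)

theorem eq_zero_or_eq_zero_of_forall_exists_dotProduct_eq {u v : Fin d → ℝ}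
    (hprod : ∀ z₁ ∈ W, ∀ z₂ ∈ W, ∃ z ∈ W, u ⬝ᵥ z = u ⬝ᵥ z₁ ∧ v ⬝ᵥ z = v ⬝ᵥ z₂)
    (r : Fin d) : u r = 0 ∨ v r = 0 := by
  by_contra! huv
  -- rescaling preserves `hprod` and gives `u' r > 0 > v' r`
  set u' := u r • u
  set v' := -v r • v
  have hsub : (u' ⬝ᵥ ·) '' W + (v' ⬝ᵥ ·) '' W ⊆ ((u' + v') ⬝ᵥ ·) '' W := by
    rintro _ ⟨_, ⟨z₁, hz₁, rfl⟩, _, ⟨z₂, hz₂, rfl⟩, rfl⟩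
    obtain ⟨z, hz, h₁, h₂⟩ := hprod z₁ hz₁ z₂ hz₂
    exact ⟨z, hz, by simp only [u', v', add_dotProduct, smul_dotProduct, h₁, h₂]⟩
  have hLUB := isLUB_dotProduct_image hW hζ hstrips
  have hge := ((hLUB u').add (hLUB v')).mono (hLUB (u' + v')) hsub
  have hlt := boxSupportFun_add_lt (u := u') (v := v') (lt_of_pi_strips_subset hW hζ hstrips r)
    (by simpa [u'] using mul_self_pos.2 huv.1)
    (by simpa [v'] using mul_self_pos.2 huv.2)
  linarith

end Box

theorem block_affine_identification_general
    (d n p : ℕ) (hp : 1 ≤ p)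
    (Z Zi : Set (Fin d → ℝ)) (hZ : (interior (Z ∪ Zi)).Nonempty)
    (αinf αsup : Fin d → ℝ)
    (hglb : ∀ r, IsGLB (proj r Zi) (αinf r))
    (hlub : ∀ r, IsLUB (proj r Zi) (αsup r))
    (ζ : ℝ) (hζ : 0 < ζ)
    (B : Fin d → Set ℝ)
    (hB : ∀ r, B r =
      Set.Ioo (αinf r) (αinf r + ζ) ∪ Set.Ioo (αsup r - ζ) (αsup r))
    (hBprod : Set.univ.pi B ⊆ Zi)
    (G H : Matrix (Fin n) (MultiIdx d p) ℝ)
    (hG : Function.Injective G.mulVec)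
    (f : (Fin n → ℝ) → (Fin d → ℝ))
    (hrec : ∀ x ∈ (fun z => G.mulVec (phi d p z)) '' (Z ∪ Zi),
      H.mulVec (phi d p (f x)) = x)
    (himg : (interior (f '' ((fun z => G.mulVec (phi d p z)) '' (Z ∪ Zi)))).Nonempty)
    (k : Fin d) (S' : Finset (Fin d))
    (hsupphat : ∀ m ∈ S',
      proj2 k m (f '' ((fun z => G.mulVec (phi d p z)) '' Zi)) =
        (proj k (f '' ((fun z => G.mulVec (phi d p z)) '' Zi))) ×ˢ
        (proj m (f '' ((fun z => G.mulVec (phi d p z)) '' Zi)))) :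
    ∃ (A : Matrix (Fin d) (Fin d) ℝ) (c : Fin d → ℝ), IsUnit A ∧
      (∀ z ∈ Z ∪ Zi, f (G.mulVec (phi d p z)) = A.mulVec z + c) ∧
      (Finset.univ.filter (fun col => A k col ≠ 0)).card ≤ d - S'.card ∧
      A k ≠ 0 ∧ (∀ m ∈ S', A m ≠ 0) ∧
      (∀ m ∈ S', ∀ col : Fin d, A k col ≠ 0 → A m col = 0) := by
  obtain ⟨A, c, hA, hF⟩ := exists_isUnit_affine_of_reconstruction hp hZ hG hrec himg
  have hrows : LinearIndependent ℝ A := Matrix.linearIndependent_rows_iff_isUnit.mpr hA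
  have hbox : Zi ⊆ Icc αinf αsup := fun z hz =>
    ⟨fun r => (hglb r).1 ⟨z, hz, rfl⟩, fun r => (hlub r).1 ⟨z, hz, rfl⟩⟩
  obtain rfl : B = _ := funext hB
  simp only [image_image] at hsupphat
  have hdisj : ∀ m ∈ S', ∀ col, A k col ≠ 0 → A m col = 0 := fun m hm col hk =>
    (eq_zero_or_eq_zero_of_forall_exists_dotProduct_eq hbox hζ hBprod
      (exists_dotProduct_eq_of_proj2_image_eq_prod (fun z hz => hF z (Or.inr hz))
        (hsupphat m hm)) col).resolve_left hk
  have hsum := hrows.card_add_card_le_of_forall_eq_zero S'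
    (Finset.univ.filter fun col => A k col ≠ 0) fun m hm col hcol =>
      hdisj m hm col (Finset.mem_filter.mp hcol).2
  rw [Fintype.card_fin] at hsum
  exact ⟨A, c, hA, hF, by omega, hrows.ne_zero k, fun m _ => hrows.ne_zero m, hdisj⟩

/-- **block-affine identification under perfect and imperfect
interventions.**  The interventional support `Zi` has bounded coordinate projections
with `ζ`-thick boundary strips `B r` contained in the projections and whose product lies
in `Zi`, and the intervened latent `i` has support independent of every `j ∈ S`.  If the
full-column-rank polynomial decoder `g`, learned polynomial decoder `h`, and encoder `f`
satisfy the reconstruction identity on `g(Z ∪ Zi)` with the interior conditions, and the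
encoder output support `Ẑ = f(g(Zi))` satisfies support independence for the pairs
`(k, m)`, `m ∈ S'` with `k ∉ S'` and `|S'| ≤ |S|`, then `f ∘ g = A · + c` with `A`
invertible, the row `A k` has at most `d - |S'|` nonzero entries, the rows `A k` and
`A m` (`m ∈ S'`) are nonzero, and `A m` vanishes in every column where `A k` is
nonzero. -/
theorem block_affine_identification
    (d n p : ℕ) (hd : 1 ≤ d) (hn : 1 ≤ n) (hp : 1 ≤ p)
    (Z Zi : Set (Fin d → ℝ)) (hZ : (interior (Z ∪ Zi)).Nonempty)
    (αinf αsup : Fin d → ℝ)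
    (hglb : ∀ r, IsGLB (proj r Zi) (αinf r))
    (hlub : ∀ r, IsLUB (proj r Zi) (αsup r))
    (ζ : ℝ) (hζ : 0 < ζ)
    (B : Fin d → Set ℝ)
    (hB : ∀ r, B r =
      Set.Ioo (αinf r) (αinf r + ζ) ∪ Set.Ioo (αsup r - ζ) (αsup r))
    (hBsub : ∀ r, B r ⊆ proj r Zi)
    (hBprod : Set.univ.pi B ⊆ Zi)
    (i : Fin d) (S : Finset (Fin d))
    (hsupp : ∀ j ∈ S, proj2 i j Zi = (proj i Zi) ×ˢ (proj j Zi))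
    (G H : Matrix (Fin n) (MultiIdx d p) ℝ)
    (hG : Function.Injective G.mulVec)
    (f : (Fin n → ℝ) → (Fin d → ℝ))
    (hrec : ∀ x ∈ (fun z => G.mulVec (phi d p z)) '' (Z ∪ Zi),
      H.mulVec (phi d p (f x)) = x)
    (himg : (interior (f '' ((fun z => G.mulVec (phi d p z)) '' (Z ∪ Zi)))).Nonempty)
    (k : Fin d) (S' : Finset (Fin d)) (hkS' : k ∉ S') (hcard : S'.card ≤ S.card)
    (hsupphat : ∀ m ∈ S',
      proj2 k m (f '' ((fun z => G.mulVec (phi d p z)) '' Zi)) =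
        (proj k (f '' ((fun z => G.mulVec (phi d p z)) '' Zi))) ×ˢ
        (proj m (f '' ((fun z => G.mulVec (phi d p z)) '' Zi)))) :
    ∃ (A : Matrix (Fin d) (Fin d) ℝ) (c : Fin d → ℝ), IsUnit A ∧
      (∀ z ∈ Z ∪ Zi, f (G.mulVec (phi d p z)) = A.mulVec z + c) ∧
      (Finset.univ.filter (fun col => A k col ≠ 0)).card ≤ d - S'.card ∧
      A k ≠ 0 ∧ (∀ m ∈ S', A m ≠ 0) ∧
      (∀ m ∈ S', ∀ col : Fin d, A k col ≠ 0 → A m col = 0) :=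
  block_affine_identification_general d n p hp Z Zi hZ αinf αsup hglb hlub ζ hζ B hB hBprod G H hG f
    hrec himg k S' hsupphat
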